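/- arXiv:1811.06466 — 5 statements merged into one kernel-verified Lean document; each statement's English description precedes it below -/
import Mathlib

section
/- Let A(t) be invertible n×n real matrices for t ∈ {0,...,N-1}, Φ the principal fundamental matrix, B₀,...,B_N n×n matrices, and define the linear operator L : X → Z by (Lx)(t) = x(t+1) − A(t)x(t), where X = { x : {0,...,N} → ℝⁿ : ∑_{i=0}^N B_i x(i) = 0 } and Z = { h : {0,...,N-1} → ℝⁿ }. Then h ∈ Z lies in the image of L if and only if the vector ∑_{k=1}^N B_k Φ(k) ∑_{i=0}^{k-1} Φ(i+1)⁻¹ h(i) is orthogonal to ker((∑_{i=0}^N B_i Φ(i))ᵀ). -/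
open Matrix Finset

/-- Solvability of `M *ᵥ x = u` from orthogonality to `ker Mᵀ`. -/
lemma exists_mulVec_eq_of_orth {n : ℕ} (M : Matrix (Fin n) (Fin n) ℝ) (u : Fin n → ℝ)
    (H : ∀ w, Mᵀ *ᵥ w = 0 → u ⬝ᵥ w = 0) : ∃ x, M *ᵥ x = u := by
  let S : Submodule ℝ (EuclideanSpace ℝ (Fin n)) :=
    { carrier := {v | ∃ x, M *ᵥ x = v}
      add_mem' := by rintro a b ⟨x, hx⟩ ⟨y, hy⟩; exact ⟨x + y, by simp [Matrix.mulVec_add, hx, hy]⟩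
      zero_mem' := ⟨0, Matrix.mulVec_zero _⟩
      smul_mem' := by rintro c a ⟨x, hx⟩; exact ⟨c • x, by simp [Matrix.mulVec_smul, hx]⟩ }
  have hu : WithLp.toLp 2 u ∈ S := by
    rw [← Submodule.orthogonal_orthogonal S]
    intro w hw
    have hMw : Mᵀ *ᵥ w.ofLp = 0 := by
      funext j
      have h0 := hw (WithLp.toLp 2 (M *ᵥ Pi.single j 1)) ⟨Pi.single j 1, rfl⟩
      simpa [PiLp.inner_apply, Matrix.mulVec_single_one, Matrix.mulVec, dotProduct,
        Matrix.transpose_apply, mul_comm] using h0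
    have h1 := H w.ofLp hMw
    simpa [PiLp.inner_apply, dotProduct, mul_comm] using h1
  exact hu

/-- Characterization of the image of the difference operator with multipoint
boundary conditions (Proposition 2.1). -/
theorem image_of_L (n N : ℕ) (hN : 0 < N)
    (A : ℕ → Matrix (Fin n) (Fin n) ℝ)
    (hA : ∀ t, IsUnit (A t))
    (Φ : ℕ → Matrix (Fin n) (Fin n) ℝ)
    (hΦ0 : Φ 0 = 1) (hΦ : ∀ t, Φ (t + 1) = A t * Φ t)
    (B : ℕ → Matrix (Fin n) (Fin n) ℝ)
    (h : ℕ → Fin n → ℝ) :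
    (∃ x : ℕ → Fin n → ℝ,
      (∑ i ∈ Finset.range (N + 1), B i *ᵥ x i) = 0 ∧
      ∀ t < N, x (t + 1) - A t *ᵥ x t = h t) ↔
    (∀ w : Fin n → ℝ,
      (∑ i ∈ Finset.range (N + 1), B i * Φ i)ᵀ *ᵥ w = 0 →
      (∑ k ∈ Finset.Icc 1 N,
          B k *ᵥ (Φ k *ᵥ ∑ i ∈ Finset.range k, (Φ (i + 1))⁻¹ *ᵥ h i)) ⬝ᵥ w = 0) := by
  have hΦu : ∀ t, IsUnit (Φ t) := by
    intro t
    induction t with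
    | zero => rw [hΦ0]; exact isUnit_one
    | succ t ih => rw [hΦ]; exact (hA t).mul ih
  set Sv : ℕ → Fin n → ℝ := fun k => ∑ i ∈ Finset.range k, (Φ (i + 1))⁻¹ *ᵥ h i with hSv
  set M : Matrix (Fin n) (Fin n) ℝ := ∑ i ∈ Finset.range (N + 1), B i * Φ i with hM
  set v : Fin n → ℝ := ∑ k ∈ Finset.Icc 1 N,
      B k *ᵥ (Φ k *ᵥ ∑ i ∈ Finset.range k, (Φ (i + 1))⁻¹ *ᵥ h i) with hv
  have hv' : v = ∑ k ∈ Finset.Icc 1 N, B k *ᵥ (Φ k *ᵥ Sv k) := rfl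
  have hkey : ∀ k, Φ (k + 1) *ᵥ Sv (k + 1) = A k *ᵥ (Φ k *ᵥ Sv k) + h k := by
    intro k
    have h1 : Φ (k + 1) *ᵥ ((Φ (k + 1))⁻¹ *ᵥ h k) = h k := by
      rw [Matrix.mulVec_mulVec,
        Matrix.mul_nonsing_inv _ ((Matrix.isUnit_iff_isUnit_det _).mp (hΦu _)),
        Matrix.one_mulVec]
    calc Φ (k + 1) *ᵥ Sv (k + 1)
        = Φ (k + 1) *ᵥ Sv k + Φ (k + 1) *ᵥ ((Φ (k + 1))⁻¹ *ᵥ h k) := by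
          simp only [hSv, Finset.sum_range_succ, Matrix.mulVec_add]
      _ = A k *ᵥ (Φ k *ᵥ Sv k) + h k := by
          rw [h1, hΦ, ← Matrix.mulVec_mulVec]
  have hsplit : Finset.range (N + 1) = insert 0 (Finset.Icc 1 N) := by
    ext i; simp [Nat.lt_succ_iff]; omega
  have hsum : ∀ x0 : Fin n → ℝ,
      (∑ i ∈ Finset.range (N + 1), B i *ᵥ (Φ i *ᵥ x0 + Φ i *ᵥ Sv i)) = M *ᵥ x0 + v := by
    intro x0
    have e1 : ∀ i, B i *ᵥ (Φ i *ᵥ x0 + Φ i *ᵥ Sv i)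
        = (B i * Φ i) *ᵥ x0 + B i *ᵥ (Φ i *ᵥ Sv i) := by
      intro i; rw [Matrix.mulVec_add, Matrix.mulVec_mulVec]
    simp only [e1, Finset.sum_add_distrib]
    congr 1
    · rw [hM]
      ext i
      simp [Matrix.mulVec, dotProduct, Matrix.sum_apply, Finset.sum_mul]
      rw [Finset.sum_comm]
    · rw [hv', hsplit, Finset.sum_insert (by simp)]
      simp only [hSv]
      simp [Matrix.mulVec_zero]
  constructor
  · rintro ⟨x, hb, hL⟩ w hw
    have hx : ∀ k, k ≤ N → x k = Φ k *ᵥ x 0 + Φ k *ᵥ Sv k := by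
      intro k
      induction k with
      | zero =>
        intro _
        simp [hΦ0, hSv, Matrix.one_mulVec, Matrix.mulVec_zero]
      | succ k ih =>
        intro hk
        have hk' : k < N := by omega
        have hx1 : x (k + 1) = A k *ᵥ x k + h k := by
          have := hL k hk'
          rw [sub_eq_iff_eq_add] at this
          rw [this]; abel
        rw [hx1, ih (le_of_lt hk'), Matrix.mulVec_add, hkey k, hΦ k,
          ← Matrix.mulVec_mulVec]
        abel
    have hb' : M *ᵥ x 0 + v = 0 := by
      rw [← hsum (x 0), ← hb]
      exact Finset.sum_congr rfl fun i hi => by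
        rw [hx i (by simpa [Nat.lt_succ_iff] using Finset.mem_range.mp hi)]
    have hveq : v = -(M *ᵥ x 0) := by linear_combination (norm := module) hb'
    rw [hveq, neg_dotProduct, dotProduct_comm, Matrix.dotProduct_mulVec,
      ← Matrix.mulVec_transpose, hw, zero_dotProduct, neg_zero]
  · intro H
    obtain ⟨x0, hx0⟩ := exists_mulVec_eq_of_orth M (-v)
      (fun w hw => by rw [neg_dotProduct, H w hw, neg_zero])
    refine ⟨fun k => Φ k *ᵥ x0 + Φ k *ᵥ Sv k, ?_, ?_⟩
    · rw [hsum x0, hx0]; abel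
    · intro t _
      beta_reduce
      rw [Matrix.mulVec_add, hkey t, hΦ t, ← Matrix.mulVec_mulVec]
      abel
end

section
/- With the setup above, suppose ker((∑_{i=0}^N B_i Φ(i))ᵀ) is spanned by a single vector w ∈ ℝⁿ, and define Ψᵀ(t) = ∑_{i=t+1}^N wᵀ B_i Φ(i) Φ(t+1)⁻¹ for t ∈ {0,...,N-1}. Then h ∈ Z lies in the image of L if and only if ∑_{i=0}^{N-1} Ψᵀ(i) h(i) = 0. -/
open Matrix Finset

lemma fredholm {n : ℕ} (M : Matrix (Fin n) (Fin n) ℝ) (w : Fin n → ℝ)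
    (hker : ∀ v : Fin n → ℝ, Mᵀ *ᵥ v = 0 ↔ ∃ c : ℝ, v = c • w) (b : Fin n → ℝ) :
    (∃ v, M *ᵥ v = b) ↔ w ⬝ᵥ b = 0 := by
  have hMw : Mᵀ *ᵥ w = 0 := (hker w).mpr ⟨1, (one_smul ℝ w).symm⟩
  constructor
  · rintro ⟨v, rfl⟩
    rw [dotProduct_mulVec, ← mulVec_transpose, hMw, zero_dotProduct]
  · intro hb
    have hkerspan : LinearMap.ker Mᵀ.mulVecLin = Submodule.span ℝ {w} := by
      ext v
      simp only [LinearMap.mem_ker, mulVecLin_apply, hker, Submodule.mem_span_singleton]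
      constructor
      · rintro ⟨c, rfl⟩; exact ⟨c, rfl⟩
      · rintro ⟨c, rfl⟩; exact ⟨c, rfl⟩
    have hrn := LinearMap.finrank_range_add_finrank_ker Mᵀ.mulVecLin
    have hrankT : Mᵀ.rank = Matrix.rank M := Matrix.rank_transpose M
    have hrankdef : M.rank = Module.finrank ℝ (LinearMap.range M.mulVecLin) := rfl
    have hrankdefT : Mᵀ.rank = Module.finrank ℝ (LinearMap.range Mᵀ.mulVecLin) := rfl
    have hdim : Module.finrank ℝ (Fin n → ℝ) = n := Module.finrank_fin_fun ℝ
    by_cases hw : w = 0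
    · subst hw
      have hk : LinearMap.ker Mᵀ.mulVecLin = ⊥ := by rw [hkerspan]; simp
      rw [hk] at hrn
      have hr : Module.finrank ℝ (LinearMap.range M.mulVecLin) = n := by
        rw [← hrankdef, ← hrankT, hrankdefT]; simpa [hdim] using hrn
      have ht : LinearMap.range M.mulVecLin = ⊤ :=
        Submodule.eq_top_of_finrank_eq (by rw [hr, hdim])
      obtain ⟨v, hv⟩ := ht ▸ (Submodule.mem_top : b ∈ ⊤)
      exact ⟨v, hv⟩
    · have hkdim : Module.finrank ℝ (LinearMap.ker Mᵀ.mulVecLin) = 1 := by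
        rw [hkerspan]; exact finrank_span_singleton hw
      rw [hkdim, hdim] at hrn
      have hrange : Module.finrank ℝ (LinearMap.range M.mulVecLin) = n - 1 := by
        rw [← hrankdef, ← hrankT, hrankdefT]; omega
      set φ : (Fin n → ℝ) →ₗ[ℝ] ℝ :=
        { toFun := fun v => w ⬝ᵥ v
          map_add' := fun u v => dotProduct_add w u v
          map_smul' := fun c v => by simp [dotProduct_smul] } with hφ
      have hφw : φ w ≠ 0 := by
        simp only [hφ, LinearMap.coe_mk, AddHom.coe_mk]
        simpa using hw
      have hrnφ := LinearMap.finrank_range_add_finrank_ker φ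
      have hrangeφ : Module.finrank ℝ (LinearMap.range φ) = 1 := by
        have h1 : Module.finrank ℝ (LinearMap.range φ) ≤ 1 := by
          simpa using (Submodule.finrank_le (LinearMap.range φ))
        have h0 : LinearMap.range φ ≠ ⊥ := by
          intro hbot
          rw [LinearMap.range_eq_bot] at hbot
          exact hφw (by rw [hbot]; rfl)
        have h2 : Module.finrank ℝ (LinearMap.range φ) ≠ 0 := fun hz =>
          h0 (Submodule.finrank_eq_zero.mp hz)
        omega
      rw [hrangeφ, hdim] at hrnφ
      have hle : LinearMap.range M.mulVecLin ≤ LinearMap.ker φ := by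
        rintro _ ⟨v, rfl⟩
        simp only [LinearMap.mem_ker, hφ, LinearMap.coe_mk, AddHom.coe_mk, mulVecLin_apply]
        rw [dotProduct_mulVec, ← mulVec_transpose, hMw, zero_dotProduct]
      have heq : LinearMap.range M.mulVecLin = LinearMap.ker φ :=
        Submodule.eq_of_le_of_finrank_le hle (by rw [hrange]; omega)
      have hbmem : b ∈ LinearMap.ker φ := by
        simp only [LinearMap.mem_ker, hφ, LinearMap.coe_mk, AddHom.coe_mk]; exact hb
      obtain ⟨v, hv⟩ := heq ▸ hbmem
      exact ⟨v, hv⟩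

lemma sum_swap_aux (N : ℕ) (f : ℕ → ℕ → ℝ) :
    ∑ i ∈ Finset.range (N+1), ∑ j ∈ Finset.range i, f i j
      = ∑ j ∈ Finset.range N, ∑ i ∈ Finset.Icc (j+1) N, f i j := by
  have h1 : ∀ i ∈ Finset.range (N+1),
      ∑ j ∈ Finset.range i, f i j = ∑ j ∈ Finset.range (N+1), if j < i then f i j else 0 := by
    intro i hi
    rw [← Finset.sum_filter]
    apply Finset.sum_congr _ (fun _ _ => rfl)
    ext j
    simp only [Finset.mem_range, Finset.mem_filter] at *
    omega
  rw [Finset.sum_congr rfl h1, Finset.sum_comm]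
  have h2 : ∀ j ∈ Finset.range (N+1),
      ∑ i ∈ Finset.range (N+1), (if j < i then f i j else 0) = ∑ i ∈ Finset.Icc (j+1) N, f i j := by
    intro j hj
    rw [← Finset.sum_filter]
    apply Finset.sum_congr _ (fun _ _ => rfl)
    ext i
    simp only [Finset.mem_range, Finset.mem_filter, Finset.mem_Icc] at *
    omega
  rw [Finset.sum_congr rfl h2, Finset.sum_range_succ]
  simp

lemma sum_mulVec' {n : ℕ} {s : Finset ℕ} (A : ℕ → Matrix (Fin n) (Fin n) ℝ) (v : Fin n → ℝ) :
    (∑ i ∈ s, A i) *ᵥ v = ∑ i ∈ s, A i *ᵥ v := by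
  induction s using Finset.cons_induction with
  | empty => simp [Matrix.zero_mulVec]
  | cons a s ha ih => rw [Finset.sum_cons, Finset.sum_cons, Matrix.add_mulVec, ih]

lemma mulVec_sum' {n : ℕ} {s : Finset ℕ} (M : Matrix (Fin n) (Fin n) ℝ) (g : ℕ → Fin n → ℝ) :
    M *ᵥ (∑ i ∈ s, g i) = ∑ i ∈ s, M *ᵥ g i := by
  induction s using Finset.cons_induction with
  | empty => simp [Matrix.mulVec_zero]
  | cons a s ha ih => rw [Finset.sum_cons, Finset.sum_cons, Matrix.mulVec_add, ih]

lemma vecMul_sum' {n : ℕ} {s : Finset ℕ} (v : Fin n → ℝ) (A : ℕ → Matrix (Fin n) (Fin n) ℝ) :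
    v ᵥ* (∑ i ∈ s, A i) = ∑ i ∈ s, v ᵥ* A i := by
  induction s using Finset.cons_induction with
  | empty => simp [Matrix.vecMul_zero]
  | cons a s ha ih => rw [Finset.sum_cons, Finset.sum_cons, Matrix.vecMul_add, ih]

lemma sum_dotProduct' {n : ℕ} {s : Finset ℕ} (g : ℕ → Fin n → ℝ) (x : Fin n → ℝ) :
    (∑ i ∈ s, g i) ⬝ᵥ x = ∑ i ∈ s, g i ⬝ᵥ x := by
  induction s using Finset.cons_induction with
  | empty => simp
  | cons a s ha ih => rw [Finset.sum_cons, Finset.sum_cons, add_dotProduct, ih]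

lemma dotProduct_sum' {n : ℕ} {s : Finset ℕ} (x : Fin n → ℝ) (g : ℕ → Fin n → ℝ) :
    x ⬝ᵥ (∑ i ∈ s, g i) = ∑ i ∈ s, x ⬝ᵥ g i := by
  induction s using Finset.cons_induction with
  | empty => simp
  | cons a s ha ih => rw [Finset.sum_cons, Finset.sum_cons, dotProduct_add, ih]

/-- With a one-dimensional left kernel spanned by `w`, `h ∈ Im L` iff
`∑ Ψᵀ(i) h(i) = 0` (Proposition 2.3). -/
theorem image_of_L_psi (n N : ℕ) (hN : 0 < N)
    (A : ℕ → Matrix (Fin n) (Fin n) ℝ)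
    (hA : ∀ t, IsUnit (A t))
    (Φ : ℕ → Matrix (Fin n) (Fin n) ℝ)
    (hΦ0 : Φ 0 = 1) (hΦ : ∀ t, Φ (t + 1) = A t * Φ t)
    (B : ℕ → Matrix (Fin n) (Fin n) ℝ)
    (w : Fin n → ℝ)
    (hker : ∀ v : Fin n → ℝ,
      (∑ i ∈ Finset.range (N + 1), B i * Φ i)ᵀ *ᵥ v = 0 ↔ ∃ c : ℝ, v = c • w)
    (Ψ : ℕ → Fin n → ℝ)
    (hΨ : ∀ t, Ψ t = w ᵥ* ∑ i ∈ Finset.Icc (t + 1) N, B i * Φ i * (Φ (t + 1))⁻¹)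
    (h : ℕ → Fin n → ℝ) :
    (∃ x : ℕ → Fin n → ℝ,
      (∑ i ∈ Finset.range (N + 1), B i *ᵥ x i) = 0 ∧
      ∀ t < N, x (t + 1) - A t *ᵥ x t = h t) ↔
    (∑ i ∈ Finset.range N, Ψ i ⬝ᵥ h i) = 0 := by
  have hU : ∀ t, IsUnit (Φ t) := by
    intro t
    induction t with
    | zero => rw [hΦ0]; exact isUnit_one
    | succ t ih => rw [hΦ]; exact (hA t).mul ih
  have hΦinv : ∀ t, Φ t * (Φ t)⁻¹ = 1 := fun t =>
    Matrix.mul_nonsing_inv _ ((Matrix.isUnit_iff_isUnit_det _).mp (hU t))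
  set M : Matrix (Fin n) (Fin n) ℝ := ∑ i ∈ Finset.range (N + 1), B i * Φ i with hM
  set c : ℕ → Fin n → ℝ :=
    fun t => ∑ j ∈ Finset.range t, (Φ t * (Φ (j + 1))⁻¹) *ᵥ h j with hc
  set S : Fin n → ℝ := ∑ i ∈ Finset.range (N + 1), B i *ᵥ c i with hS
  have hcstep : ∀ t, c (t + 1) = A t *ᵥ c t + h t := by
    intro t
    rw [hc]
    simp only
    rw [Finset.sum_range_succ, mulVec_sum']
    congr 1
    · apply Finset.sum_congr rfl
      intro j hj
      rw [Matrix.mulVec_mulVec, hΦ, Matrix.mul_assoc]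
    · rw [hΦinv, Matrix.one_mulVec]
  have hsum : ∀ v : Fin n → ℝ,
      ∑ i ∈ Finset.range (N + 1), B i *ᵥ (Φ i *ᵥ v + c i) = M *ᵥ v + S := by
    intro v
    rw [hM, hS, sum_mulVec', ← Finset.sum_add_distrib]
    apply Finset.sum_congr rfl
    intro i hi
    rw [Matrix.mulVec_add, Matrix.mulVec_mulVec]
  have hequiv : (∃ x : ℕ → Fin n → ℝ,
      (∑ i ∈ Finset.range (N + 1), B i *ᵥ x i) = 0 ∧
      ∀ t < N, x (t + 1) - A t *ᵥ x t = h t) ↔ (∃ v, M *ᵥ v = -S) := by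
    constructor
    · rintro ⟨x, hx0, hxr⟩
      have hform : ∀ t, t ≤ N → x t = Φ t *ᵥ x 0 + c t := by
        intro t
        induction t with
        | zero => intro _; simp [hΦ0, hc, Matrix.one_mulVec]
        | succ t ih =>
          intro ht
          have h1 : x (t + 1) = A t *ᵥ x t + h t := by
            have := hxr t (by omega)
            rw [sub_eq_iff_eq_add] at this
            rw [this, add_comm]
          rw [h1, ih (by omega), Matrix.mulVec_add, Matrix.mulVec_mulVec, ← hΦ,
            hcstep, add_assoc]
      refine ⟨x 0, ?_⟩
      have heq : ∑ i ∈ Finset.range (N + 1), B i *ᵥ x i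
          = ∑ i ∈ Finset.range (N + 1), B i *ᵥ (Φ i *ᵥ x 0 + c i) := by
        apply Finset.sum_congr rfl
        intro i hi
        rw [hform i (Nat.lt_succ_iff.mp (Finset.mem_range.mp hi))]
      rw [heq, hsum] at hx0
      exact eq_neg_of_add_eq_zero_left hx0
    · rintro ⟨v, hv⟩
      refine ⟨fun t => Φ t *ᵥ v + c t, ?_, ?_⟩
      · rw [hsum, hv, neg_add_cancel]
      · intro t ht
        show Φ (t + 1) *ᵥ v + c (t + 1) - A t *ᵥ (Φ t *ᵥ v + c t) = h t
        rw [Matrix.mulVec_add, hcstep, hΦ, ← Matrix.mulVec_mulVec]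
        abel
  have key : ∑ i ∈ Finset.range N, Ψ i ⬝ᵥ h i = w ⬝ᵥ S := by
    have h1 : w ⬝ᵥ S = ∑ i ∈ Finset.range (N + 1), ∑ j ∈ Finset.range i,
        w ⬝ᵥ ((B i * Φ i * (Φ (j + 1))⁻¹) *ᵥ h j) := by
      rw [hS, dotProduct_sum']
      apply Finset.sum_congr rfl
      intro i _
      rw [hc]
      simp only
      rw [mulVec_sum', dotProduct_sum']
      apply Finset.sum_congr rfl
      intro j _
      rw [Matrix.mulVec_mulVec, Matrix.mul_assoc]
    rw [h1, sum_swap_aux]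
    apply Finset.sum_congr rfl
    intro j _
    rw [hΨ, vecMul_sum', sum_dotProduct']
    apply Finset.sum_congr rfl
    intro i _
    rw [Matrix.dotProduct_mulVec]
  rw [hequiv, fredholm M w hker (-S), dotProduct_neg, neg_eq_zero, key]
end

section
/- Let V : ℝⁿ → ℝⁿ be the orthogonal projection onto ker(∑_{i=0}^N B_i Φ(i)), and define P : X → X by (Px)(t) = Φ(t) V x(0). Then P is a linear projection (P² = P) whose image is exactly ker(L), where (Lx)(t) = x(t+1) − A(t)x(t) on X = {x : {0,...,N}→ℝⁿ : ∑_{i=0}^N B_i x(i)=0}. -/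
open Matrix Finset

/-- `(Px)(t) = Φ(t) V x(0)` is a projection of `X` onto `ker L`, where `V` is the
orthogonal projection onto `ker (∑ Bᵢ Φ(i))`. -/
theorem P_is_projection_onto_kerL (n N : ℕ)
    (A : ℕ → Matrix (Fin n) (Fin n) ℝ)
    (hA : ∀ t, IsUnit (A t))
    (Φ : ℕ → Matrix (Fin n) (Fin n) ℝ)
    (hΦ0 : Φ 0 = 1) (hΦ : ∀ t, Φ (t + 1) = A t * Φ t)
    (B : ℕ → Matrix (Fin n) (Fin n) ℝ)
    (V : (Fin n → ℝ) →ₗ[ℝ] (Fin n → ℝ))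
    -- V is the orthogonal projection onto ker(∑ Bᵢ Φ(i)):
    (hVrange : ∀ v, (∑ i ∈ Finset.range (N + 1), B i * Φ i) *ᵥ V v = 0)
    (hVfix : ∀ v, (∑ i ∈ Finset.range (N + 1), B i * Φ i) *ᵥ v = 0 → V v = v)
    (hVorth : ∀ v u, (∑ i ∈ Finset.range (N + 1), B i * Φ i) *ᵥ u = 0 →
      (v - V v) ⬝ᵥ u = 0)
    (P : (ℕ → Fin n → ℝ) → (ℕ → Fin n → ℝ))
    (hP : ∀ x t, P x t = Φ t *ᵥ V (x 0)) :
    -- P maps X into X: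
    (∀ x : ℕ → Fin n → ℝ, (∑ i ∈ Finset.range (N + 1), B i *ᵥ x i) = 0 →
      (∑ i ∈ Finset.range (N + 1), B i *ᵥ P x i) = 0) ∧
    -- P is idempotent:
    (∀ x : ℕ → Fin n → ℝ, P (P x) = P x) ∧
    -- every P x lies in ker L (it solves the homogeneous BVP):
    (∀ x : ℕ → Fin n → ℝ, ∀ t, P x (t + 1) = A t *ᵥ P x t) ∧
    -- every element of ker L is fixed by P:
    (∀ x : ℕ → Fin n → ℝ,
      (∀ t, x (t + 1) = A t *ᵥ x t) →
      (∑ i ∈ Finset.range (N + 1), B i *ᵥ x i) = 0 →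
      P x = x) := by
  have key : ∀ w : Fin n → ℝ,
      (∑ i ∈ Finset.range (N + 1), B i *ᵥ (Φ i *ᵥ w)) =
      (∑ i ∈ Finset.range (N + 1), B i * Φ i) *ᵥ w := by
    intro w
    have : ∀ i, B i *ᵥ (Φ i *ᵥ w) = (B i * Φ i) *ᵥ w := fun i => Matrix.mulVec_mulVec w (B i) (Φ i)
    simp only [this]
    funext j
    simp [Matrix.mulVec, dotProduct, Finset.sum_apply, Matrix.sum_apply, Finset.sum_mul]
    rw [Finset.sum_comm]
  refine ⟨?_, ?_, ?_, ?_⟩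
  · intro x hx
    simp only [hP]
    rw [key, hVrange]
  · intro x
    funext t
    rw [hP, hP, hP, hΦ0, Matrix.one_mulVec, hVfix _ (hVrange _)]
  · intro x t
    rw [hP, hP, hΦ, ← Matrix.mulVec_mulVec]
  · intro x hL hx
    have hx0 : ∀ t, x t = Φ t *ᵥ x 0 := by
      intro t
      induction t with
      | zero => rw [hΦ0, Matrix.one_mulVec]
      | succ t ih => rw [hL, ih, hΦ, Matrix.mulVec_mulVec]
    have : (∑ i ∈ Finset.range (N + 1), B i * Φ i) *ᵥ x 0 = 0 := by
      rw [← key]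
      simpa only [← hx0] using hx
    funext t
    rw [hP, hVfix _ this, ← hx0]
end

section
/- Suppose ker((∑_{i=0}^N B_i Φ(i))ᵀ) is one-dimensional with basis w, define Ψᵀ(t) = ∑_{i=t+1}^N wᵀ B_i Φ(i) Φ(t+1)⁻¹, and assume ∑_{j=0}^{N-1} |Ψ(j)|² ≠ 0. Define Q : Z → Z by (Qh)(t) = Ψ(t)·(∑_{j=0}^{N-1}|Ψ(j)|²)⁻¹·∑_{i=0}^{N-1} Ψᵀ(i)h(i). Then Q is a projection (Q² = Q) and I − Q is a projection onto the image of L. -/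
open Matrix Finset

private lemma Qproj_sum_mulVec {k : ℕ} {ι : Type*} (s : Finset ι)
    (M : ι → Matrix (Fin k) (Fin k) ℝ) (v : Fin k → ℝ) :
    (∑ i ∈ s, M i) *ᵥ v = ∑ i ∈ s, M i *ᵥ v := by
  induction s using Finset.cons_induction with
  | empty => simp
  | cons a s ha ih => simp [Finset.sum_cons, Matrix.add_mulVec, ih]

private lemma Qproj_mulVec_sum {k : ℕ} {ι : Type*} (s : Finset ι)
    (M : Matrix (Fin k) (Fin k) ℝ) (v : ι → Fin k → ℝ) :
    M *ᵥ (∑ i ∈ s, v i) = ∑ i ∈ s, M *ᵥ v i := by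
  induction s using Finset.cons_induction with
  | empty => simp
  | cons a s ha ih => simp [Finset.sum_cons, Matrix.mulVec_add, ih]

private lemma Qproj_dotProduct_sum {k : ℕ} {ι : Type*} (s : Finset ι)
    (w : Fin k → ℝ) (v : ι → Fin k → ℝ) :
    w ⬝ᵥ (∑ i ∈ s, v i) = ∑ i ∈ s, w ⬝ᵥ v i := by
  induction s using Finset.cons_induction with
  | empty => simp
  | cons a s ha ih => simp [Finset.sum_cons, dotProduct_add, ih]

private lemma Qproj_sum_tri {α : Type*} [AddCommMonoid α] :
    ∀ (N : ℕ) (f : ℕ → ℕ → α),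
      ∑ i ∈ Finset.range (N + 1), ∑ s ∈ Finset.range i, f i s
        = ∑ s ∈ Finset.range N, ∑ i ∈ Finset.Icc (s + 1) N, f i s := by
  intro N
  induction N with
  | zero => intro f; simp
  | succ N ih =>
      intro f
      calc ∑ i ∈ Finset.range (N + 1 + 1), ∑ s ∈ Finset.range i, f i s
          = (∑ i ∈ Finset.range (N + 1), ∑ s ∈ Finset.range i, f i s)
              + ∑ s ∈ Finset.range (N + 1), f (N + 1) s := Finset.sum_range_succ _ _
        _ = (∑ s ∈ Finset.range N, ∑ i ∈ Finset.Icc (s + 1) N, f i s)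
              + ((∑ s ∈ Finset.range N, f (N + 1) s) + f (N + 1) N) := by
              rw [ih, Finset.sum_range_succ]
        _ = (∑ s ∈ Finset.range N,
              ((∑ i ∈ Finset.Icc (s + 1) N, f i s) + f (N + 1) s)) + f (N + 1) N := by
              rw [Finset.sum_add_distrib, add_assoc]
        _ = (∑ s ∈ Finset.range N, ∑ i ∈ Finset.Icc (s + 1) (N + 1), f i s) + f (N + 1) N := by
              refine congrArg (· + f (N + 1) N) (Finset.sum_congr rfl fun s hs => ?_)
              have hsN : s < N := Finset.mem_range.mp hs
              exact (Finset.sum_Icc_succ_top (by omega) _).symm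
        _ = ∑ s ∈ Finset.range (N + 1), ∑ i ∈ Finset.Icc (s + 1) (N + 1), f i s := by
              rw [Finset.sum_range_succ, Finset.Icc_self, Finset.sum_singleton]

/-- `Q` is a projection and `I - Q` is a projection onto `Im L` (Definition 2.6). -/
theorem Q_is_projection (n N : ℕ) (hN : 0 < N)
    (A : ℕ → Matrix (Fin n) (Fin n) ℝ)
    (hA : ∀ t, IsUnit (A t))
    (Φ : ℕ → Matrix (Fin n) (Fin n) ℝ)
    (hΦ0 : Φ 0 = 1) (hΦ : ∀ t, Φ (t + 1) = A t * Φ t)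
    (B : ℕ → Matrix (Fin n) (Fin n) ℝ)
    (w : Fin n → ℝ)
    (hker : ∀ v : Fin n → ℝ,
      (∑ i ∈ Finset.range (N + 1), B i * Φ i)ᵀ *ᵥ v = 0 ↔ ∃ c : ℝ, v = c • w)
    (Ψ : ℕ → Fin n → ℝ)
    (hΨ : ∀ t, Ψ t = w ᵥ* ∑ i ∈ Finset.Icc (t + 1) N, B i * Φ i * (Φ (t + 1))⁻¹)
    (hΨnz : (∑ j ∈ Finset.range N, Ψ j ⬝ᵥ Ψ j) ≠ 0)
    (Q : (ℕ → Fin n → ℝ) → (ℕ → Fin n → ℝ))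
    (hQ : ∀ h t, Q h t =
      ((∑ j ∈ Finset.range N, Ψ j ⬝ᵥ Ψ j)⁻¹ * (∑ i ∈ Finset.range N, Ψ i ⬝ᵥ h i)) • Ψ t) :
    -- Q is idempotent:
    (∀ h : ℕ → Fin n → ℝ, Q (Q h) = Q h) ∧
    -- (I - Q) h always lies in Im L:
    (∀ h : ℕ → Fin n → ℝ, ∃ x : ℕ → Fin n → ℝ,
      (∑ i ∈ Finset.range (N + 1), B i *ᵥ x i) = 0 ∧
      ∀ t < N, x (t + 1) - A t *ᵥ x t = h t - Q h t) ∧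
    -- (I - Q) fixes Im L, i.e. Q vanishes on Im L:
    (∀ h : ℕ → Fin n → ℝ,
      (∃ x : ℕ → Fin n → ℝ,
        (∑ i ∈ Finset.range (N + 1), B i *ᵥ x i) = 0 ∧
        ∀ t < N, x (t + 1) - A t *ᵥ x t = h t) →
      ∀ t < N, Q h t = 0) := by
  classical
  set S : ℝ := ∑ j ∈ Finset.range N, Ψ j ⬝ᵥ Ψ j with hS
  -- invertibility facts
  have hAdet : ∀ t, IsUnit (A t).det := fun t => (Matrix.isUnit_iff_isUnit_det _).mp (hA t)
  have hΦu : ∀ t, IsUnit (Φ t).det := by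
    intro t
    induction t with
    | zero => simp [hΦ0]
    | succ t ih =>
        rw [hΦ, Matrix.det_mul]
        exact (hAdet t).mul ih
  -- key identity for idempotence
  have K1 : ∀ h : ℕ → Fin n → ℝ,
      (∑ i ∈ Finset.range N, Ψ i ⬝ᵥ Q h i) = ∑ i ∈ Finset.range N, Ψ i ⬝ᵥ h i := by
    intro h
    have e : ∀ i, Ψ i ⬝ᵥ Q h i
        = (S⁻¹ * (∑ i ∈ Finset.range N, Ψ i ⬝ᵥ h i)) * (Ψ i ⬝ᵥ Ψ i) := by
      intro i
      rw [hQ, dotProduct_smul, smul_eq_mul]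
    rw [Finset.sum_congr rfl fun i _ => e i, ← Finset.mul_sum, ← hS,
      mul_comm S⁻¹, mul_assoc, inv_mul_cancel₀ hΨnz, mul_one]
  have part1 : ∀ h, Q (Q h) = Q h := by
    intro h; funext t
    rw [hQ (Q h) t, hQ h t, K1 h]
  -- the matrix M
  set M : Matrix (Fin n) (Fin n) ℝ := ∑ i ∈ Finset.range (N + 1), B i * Φ i with hM
  have hwMt : Mᵀ *ᵥ w = 0 := (hker w).mpr ⟨1, (one_smul ℝ w).symm⟩
  have hwM : w ᵥ* M = 0 := by rw [← Matrix.mulVec_transpose]; exact hwMt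
  have hw0 : w ≠ 0 := by
    intro h0
    apply hΨnz
    have hz : ∀ j, Ψ j = 0 := fun j => by rw [hΨ, h0, Matrix.zero_vecMul]
    simp [hS, hz]
  have hww : w ⬝ᵥ w ≠ 0 := fun hc => hw0 (dotProduct_self_eq_zero.mp hc)
  -- the functional φ v = w ⬝ᵥ v
  let φ : (Fin n → ℝ) →ₗ[ℝ] ℝ :=
    { toFun := fun v => w ⬝ᵥ v
      map_add' := fun a b => by simp [dotProduct_add]
      map_smul' := fun c v => by simp [dotProduct_smul] }
  have hφ : ∀ v, φ v = w ⬝ᵥ v := fun v => rfl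
  have hφsurj : LinearMap.range φ = ⊤ := by
    rw [LinearMap.range_eq_top]
    intro r
    refine ⟨(r * (w ⬝ᵥ w)⁻¹) • w, ?_⟩
    show w ⬝ᵥ ((r * (w ⬝ᵥ w)⁻¹) • w) = r
    rw [dotProduct_smul, smul_eq_mul]
    field_simp
  have hnfr : Module.finrank ℝ (Fin n → ℝ) = n := by
    simp [Module.finrank_fintype_fun_eq_card]
  have hkerφ : Module.finrank ℝ (LinearMap.ker φ) + 1 = n := by
    have h1 := LinearMap.finrank_range_add_finrank_ker φ
    rw [hφsurj, finrank_top, hnfr, Module.finrank_self] at h1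
    omega
  have hkerMT : LinearMap.ker (Mᵀ.mulVecLin) = Submodule.span ℝ {w} := by
    ext v
    simp only [LinearMap.mem_ker, Matrix.mulVecLin_apply, Submodule.mem_span_singleton]
    rw [hker v]
    exact ⟨fun ⟨c, h⟩ => ⟨c, h.symm⟩, fun ⟨c, h⟩ => ⟨c, h.symm⟩⟩
  have hrankT : Mᵀ.rank + 1 = n := by
    have h1 := LinearMap.finrank_range_add_finrank_ker (Mᵀ.mulVecLin)
    rw [hkerMT, finrank_span_singleton hw0, hnfr] at h1
    exact h1
  have hrank : Module.finrank ℝ (LinearMap.range M.mulVecLin) + 1 = n := by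
    have h2 : M.rank + 1 = n := by rw [← Matrix.rank_transpose]; exact hrankT
    exact h2
  have hrange : LinearMap.range M.mulVecLin = LinearMap.ker φ := by
    apply Submodule.eq_of_le_of_finrank_le
    · rintro v ⟨y, rfl⟩
      simp only [LinearMap.mem_ker, Matrix.mulVecLin_apply]
      show w ⬝ᵥ (M *ᵥ y) = 0
      rw [Matrix.dotProduct_mulVec, hwM, zero_dotProduct]
    · omega
  -- the key Fredholm-type identity
  have key : ∀ (h x : ℕ → Fin n → ℝ),
      (∑ i ∈ Finset.range (N + 1), B i *ᵥ x i) = 0 →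
      (∀ t < N, x (t + 1) - A t *ᵥ x t = h t) →
      (∑ i ∈ Finset.range N, Ψ i ⬝ᵥ h i) = 0 := by
    intro h x hb hd
    set u : ℕ → Fin n → ℝ := fun t => (Φ t)⁻¹ *ᵥ x t with hu
    set r : ℕ → Fin n → ℝ := fun t => w ᵥ* ∑ i ∈ Finset.Icc (t + 1) N, B i * Φ i with hr
    have hΨr : ∀ t, Ψ t = r t ᵥ* (Φ (t + 1))⁻¹ := by
      intro t
      rw [hΨ t, hr, Matrix.vecMul_vecMul, Finset.sum_mul]
    have hPhiInv : ∀ t, (Φ (t + 1))⁻¹ * A t = (Φ t)⁻¹ := by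
      intro t
      rw [hΦ t, Matrix.mul_inv_rev, mul_assoc, Matrix.nonsing_inv_mul _ (hAdet t), mul_one]
    have hstep : ∀ t, t < N → Ψ t ⬝ᵥ h t = r t ⬝ᵥ u (t + 1) - r t ⬝ᵥ u t := by
      intro t ht
      rw [← hd t ht, hΨr t, ← Matrix.dotProduct_mulVec, Matrix.mulVec_sub,
        Matrix.mulVec_mulVec, hPhiInv t, dotProduct_sub]
    have hxu : ∀ t, Φ t *ᵥ u t = x t := by
      intro t
      show Φ t *ᵥ ((Φ t)⁻¹ *ᵥ x t) = x t
      rw [Matrix.mulVec_mulVec, Matrix.mul_nonsing_inv _ (hΦu t), Matrix.one_mulVec]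
    have hrdiff : ∀ t, t < N → r t = w ᵥ* (B (t + 1) * Φ (t + 1)) + r (t + 1) := by
      intro t ht
      show w ᵥ* ∑ i ∈ Finset.Icc (t + 1) N, B i * Φ i = _
      rw [← Finset.Ico_add_one_right_eq_Icc,
        Finset.sum_eq_sum_Ico_succ_bot (by omega : t + 1 < N + 1),
        Finset.Ico_add_one_right_eq_Icc, Matrix.vecMul_add]
    have hrN : r N = 0 := by
      show w ᵥ* ∑ i ∈ Finset.Icc (N + 1) N, B i * Φ i = 0
      rw [Finset.Icc_eq_empty (by omega), Finset.sum_empty, Matrix.vecMul_zero]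
    have hu0 : u 0 = x 0 := by
      show (Φ 0)⁻¹ *ᵥ x 0 = x 0
      rw [hΦ0, inv_one, Matrix.one_mulVec]
    have hr0 : r 0 = -(w ᵥ* B 0) := by
      have hsplit : M = B 0 * Φ 0 + ∑ i ∈ Finset.Icc (0 + 1) N, B i * Φ i := by
        rw [hM, Finset.range_eq_Ico,
          Finset.sum_eq_sum_Ico_succ_bot (by omega : 0 < N + 1), Finset.Ico_add_one_right_eq_Icc]
      have h2 : w ᵥ* (B 0 * Φ 0) + w ᵥ* ∑ i ∈ Finset.Icc (0 + 1) N, B i * Φ i = 0 := by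
        rw [← Matrix.vecMul_add, ← hsplit, hwM]
      rw [hΦ0, mul_one] at h2
      show w ᵥ* ∑ i ∈ Finset.Icc (0 + 1) N, B i * Φ i = -(w ᵥ* B 0)
      rw [add_comm] at h2
      exact eq_neg_of_add_eq_zero_left h2
    calc ∑ i ∈ Finset.range N, Ψ i ⬝ᵥ h i
        = ∑ t ∈ Finset.range N, (r t ⬝ᵥ u (t + 1) - r t ⬝ᵥ u t) :=
          Finset.sum_congr rfl fun t ht => hstep t (Finset.mem_range.mp ht)
      _ = ∑ t ∈ Finset.range N,
            ((w ᵥ* (B (t + 1) * Φ (t + 1))) ⬝ᵥ u (t + 1)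
              + (r (t + 1) ⬝ᵥ u (t + 1) - r t ⬝ᵥ u t)) := by
          refine Finset.sum_congr rfl fun t ht => ?_
          have e1 : w ᵥ* (B (t + 1) * Φ (t + 1)) = r t - r (t + 1) := by
            rw [hrdiff t (Finset.mem_range.mp ht)]; abel
          rw [e1, sub_dotProduct]; ring
      _ = (∑ t ∈ Finset.range N, w ⬝ᵥ (B (t + 1) *ᵥ x (t + 1)))
            + (r N ⬝ᵥ u N - r 0 ⬝ᵥ u 0) := by
          rw [Finset.sum_add_distrib, Finset.sum_range_sub (fun t => r t ⬝ᵥ u t)]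
          congr 1
          refine Finset.sum_congr rfl fun t ht => ?_
          rw [← Matrix.dotProduct_mulVec, ← Matrix.mulVec_mulVec, hxu]
      _ = ∑ i ∈ Finset.range (N + 1), w ⬝ᵥ (B i *ᵥ x i) := by
          rw [hrN, hu0, hr0, zero_dotProduct, neg_dotProduct, zero_sub, neg_neg,
            ← Matrix.dotProduct_mulVec, Finset.sum_range_succ']
      _ = w ⬝ᵥ (∑ i ∈ Finset.range (N + 1), B i *ᵥ x i) := (Qproj_dotProduct_sum _ _ _).symm
      _ = 0 := by rw [hb, dotProduct_zero]
  refine ⟨part1, ?_, ?_⟩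
  · -- (I - Q) h lies in Im L
    intro h
    set g : ℕ → Fin n → ℝ := fun t => h t - Q h t with hg
    have hgsum : ∑ s ∈ Finset.range N, Ψ s ⬝ᵥ g s = 0 := by
      simp only [hg, dotProduct_sub, Finset.sum_sub_distrib, K1 h, sub_self]
    set c : Fin n → ℝ :=
      ∑ s ∈ Finset.range N, (∑ i ∈ Finset.Icc (s + 1) N, B i * Φ i * (Φ (s + 1))⁻¹) *ᵥ g s
      with hc
    have hφc : φ c = 0 := by
      rw [hφ, hc, Qproj_dotProduct_sum]
      rw [Finset.sum_congr rfl fun s _ => Matrix.dotProduct_mulVec w _ (g s)]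
      rw [Finset.sum_congr rfl fun s _ => by rw [← hΨ s]]
      exact hgsum
    have hmem : -c ∈ LinearMap.range M.mulVecLin := by
      rw [hrange, LinearMap.mem_ker, map_neg, hφc, neg_zero]
    obtain ⟨y, hy⟩ := hmem
    have hy' : M *ᵥ y = -c := hy
    set x : ℕ → Fin n → ℝ := fun t => Nat.rec y (fun t xt => A t *ᵥ xt + g t) t with hx
    have hxsucc : ∀ t, x (t + 1) = A t *ᵥ x t + g t := fun t => rfl
    refine ⟨x, ?_, ?_⟩
    · -- boundary condition
      have xf : ∀ t, x t = Φ t *ᵥ y + ∑ s ∈ Finset.range t, (Φ t * (Φ (s + 1))⁻¹) *ᵥ g s := by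
        intro t
        induction t with
        | zero =>
            show y = Φ 0 *ᵥ y + _
            simp [hΦ0, Matrix.one_mulVec]
        | succ t ih =>
            show A t *ᵥ x t + g t = _
            rw [ih, Matrix.mulVec_add, Matrix.mulVec_mulVec, ← hΦ t]
            have e2 : A t *ᵥ (∑ s ∈ Finset.range t, (Φ t * (Φ (s + 1))⁻¹) *ᵥ g s)
                = ∑ s ∈ Finset.range t, (Φ (t + 1) * (Φ (s + 1))⁻¹) *ᵥ g s := by
              rw [Qproj_mulVec_sum]
              exact Finset.sum_congr rfl fun s _ => by
                rw [Matrix.mulVec_mulVec, ← mul_assoc, ← hΦ t]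
            have e3 : (Φ (t + 1) * (Φ (t + 1))⁻¹) *ᵥ g t = g t := by
              rw [Matrix.mul_nonsing_inv _ (hΦu (t + 1)), Matrix.one_mulVec]
            rw [e2, Finset.sum_range_succ, e3, add_assoc]
      have hxi : ∀ i, B i *ᵥ x i
          = (B i * Φ i) *ᵥ y
            + ∑ s ∈ Finset.range i, (B i * Φ i * (Φ (s + 1))⁻¹) *ᵥ g s := by
        intro i
        rw [xf i, Matrix.mulVec_add, Matrix.mulVec_mulVec]
        congr 1
        rw [Qproj_mulVec_sum]
        exact Finset.sum_congr rfl fun s _ => by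
          rw [Matrix.mulVec_mulVec, ← mul_assoc]
      calc ∑ i ∈ Finset.range (N + 1), B i *ᵥ x i
          = (∑ i ∈ Finset.range (N + 1), (B i * Φ i) *ᵥ y)
            + ∑ i ∈ Finset.range (N + 1), ∑ s ∈ Finset.range i,
                (B i * Φ i * (Φ (s + 1))⁻¹) *ᵥ g s := by
            rw [← Finset.sum_add_distrib]
            exact Finset.sum_congr rfl fun i _ => hxi i
        _ = M *ᵥ y + c := by
            congr 1
            · rw [← Qproj_sum_mulVec, ← hM]
            · rw [Qproj_sum_tri N (fun i s => (B i * Φ i * (Φ (s + 1))⁻¹) *ᵥ g s), hc]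
              exact Finset.sum_congr rfl fun s _ => (Qproj_sum_mulVec _ _ _).symm
        _ = 0 := by rw [hy', neg_add_cancel]
    · -- difference equation
      intro t ht
      rw [hxsucc t, add_sub_cancel_left]
  · -- Q vanishes on Im L
    rintro h ⟨x, hb, hd⟩ t ht
    rw [hQ h t, key h x hb hd, mul_zero, zero_smul]
end

section
/- Suppose ker((∑_{i=0}^N B_i Φ(i))ᵀ) is spanned by w and Ψᵀ(t) = ∑_{i=t+1}^N wᵀ B_i Φ(i)Φ(t+1)⁻¹. If the matrices B₀,...,B_N satisfy ∩_{k=0}^N ker(B_kᵀ) = {0} (independence of the boundary conditions) and w ≠ 0, then Ψ is not identically zero, i.e., ∑_{j=0}^{N-1} |Ψ(j)|² > 0. -/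
open Matrix Finset

/-- Under independence of the boundary conditions, `Ψ` is not identically zero,
so the projection `Q` is well-defined. -/
theorem psi_not_identically_zero (n N : ℕ) (hN : 0 < N)
    (A : ℕ → Matrix (Fin n) (Fin n) ℝ)
    (hA : ∀ t, IsUnit (A t))
    (Φ : ℕ → Matrix (Fin n) (Fin n) ℝ)
    (hΦ0 : Φ 0 = 1) (hΦ : ∀ t, Φ (t + 1) = A t * Φ t)
    (B : ℕ → Matrix (Fin n) (Fin n) ℝ)
    (hind : ∀ v : Fin n → ℝ, (∀ k ≤ N, (B k)ᵀ *ᵥ v = 0) → v = 0)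
    (w : Fin n → ℝ) (hw : w ≠ 0)
    (hwker : (∑ i ∈ Finset.range (N + 1), B i * Φ i)ᵀ *ᵥ w = 0)
    (Ψ : ℕ → Fin n → ℝ)
    (hΨ : ∀ t, Ψ t = w ᵥ* ∑ i ∈ Finset.Icc (t + 1) N, B i * Φ i * (Φ (t + 1))⁻¹) :
    0 < ∑ j ∈ Finset.range N, Ψ j ⬝ᵥ Ψ j := by
  -- units
  have hΦu : ∀ t, IsUnit (Φ t) := by
    intro t
    induction t with
    | zero => rw [hΦ0]; exact isUnit_one
    | succ t ih => rw [hΦ]; exact (hA t).mul ih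
  have hΦdet : ∀ t, IsUnit (Φ t).det := fun t =>
    (Matrix.isUnit_iff_isUnit_det _).mp (hΦu t)
  by_contra hcon
  push_neg at hcon
  have hterm : ∀ j ∈ Finset.range N, Ψ j ⬝ᵥ Ψ j = 0 := by
    have hnn : ∀ j ∈ Finset.range N, 0 ≤ Ψ j ⬝ᵥ Ψ j := fun j _ =>
      Finset.sum_nonneg fun i _ => mul_self_nonneg _
    have hz : ∑ j ∈ Finset.range N, Ψ j ⬝ᵥ Ψ j = 0 :=
      le_antisymm hcon (Finset.sum_nonneg hnn)
    exact (Finset.sum_eq_zero_iff_of_nonneg hnn).mp hz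
  have hΨ0 : ∀ j < N, Ψ j = 0 := by
    intro j hj
    have := hterm j (Finset.mem_range.mpr hj)
    exact (dotProduct_self_eq_zero).mp this
  -- the partial sums vanish
  have hS : ∀ k : ℕ, w ᵥ* ∑ i ∈ Finset.Icc k N, B i * Φ i = 0 := by
    intro k
    rcases Nat.lt_or_ge N k with hk | hk
    · rw [Finset.Icc_eq_empty (by omega)]
      simp
    · rcases Nat.eq_zero_or_pos k with rfl | hkpos
      · have : Finset.Icc 0 N = Finset.range (N + 1) := by
          rw [Finset.range_eq_Ico, Finset.Ico_add_one_right_eq_Icc]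
        rw [this, ← Matrix.mulVec_transpose, hwker]
      · obtain ⟨j, rfl⟩ : ∃ j, k = j + 1 := ⟨k - 1, by omega⟩
        have hj : j < N := by omega
        have h0 : Ψ j = 0 := hΨ0 j hj
        rw [hΨ] at h0
        have h1 := congrArg (fun v => v ᵥ* Φ (j + 1)) h0
        simp only [Matrix.zero_vecMul, Matrix.vecMul_vecMul] at h1
        rw [Finset.sum_mul] at h1
        have heach : ∀ i ∈ Finset.Icc (j + 1) N,
            B i * Φ i * (Φ (j + 1))⁻¹ * Φ (j + 1) = B i * Φ i := fun i _ =>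
          Matrix.nonsing_inv_mul_cancel_right _ _ (hΦdet (j + 1))
        rw [Finset.sum_congr rfl heach] at h1
        exact h1
  -- each w ᵥ* B k = 0
  have hB : ∀ k ≤ N, (B k)ᵀ *ᵥ w = 0 := by
    intro k hk
    have hsplit : Finset.Icc k N = insert k (Finset.Icc (k + 1) N) := by
      ext x
      simp only [Finset.mem_insert, Finset.mem_Icc]
      omega
    have hfk : w ᵥ* (B k * Φ k) = 0 := by
      have h1 := hS k
      rw [hsplit, Finset.sum_insert (by simp), Matrix.vecMul_add, hS (k + 1),
        add_zero] at h1
      exact h1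
    have h2 := congrArg (fun v => v ᵥ* (Φ k)⁻¹) hfk
    simp only [Matrix.zero_vecMul, Matrix.vecMul_vecMul] at h2
    rw [Matrix.mul_nonsing_inv_cancel_right _ _ (hΦdet k)] at h2
    rw [Matrix.mulVec_transpose]
    exact h2
  exact hw (hind w hB)
end
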